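/- arXiv:1802.06862 — 3 statements merged into one kernel-verified Lean document; each statement's English description precedes it below -/
import Mathlib

section
/- For fixed constants y ≥ 0 and B > 0, the function h(t) = (2^{y/(B t)} − 1)·t is convex on (0, ∞). -/
/-!
With `c = y / B`, the function is `t ↦ t f(c / t)` for the convex `f x = 2 ^ x - 1`, i.e. the
perspective of a convex function, and perspectives of convex functions are convex.
-/

open Set

theorem ConvexOn.perspective {E : Type*} [AddCommGroup E] [Module ℝ E] {f : E → ℝ}
    (hf : ConvexOn ℝ univ f) (x : E) :
    ConvexOn ℝ (Ioi 0) (fun t : ℝ => t * f (t⁻¹ • x)) := by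
  refine ⟨convex_Ioi 0, fun t₁ (ht₁ : 0 < t₁) t₂ (ht₂ : 0 < t₂) a b ha hb hab => ?_⟩
  set t := a * t₁ + b * t₂
  have ht : 0 < t := convex_Ioi (0 : ℝ) ht₁ ht₂ ha hb hab
  have hweights : a * t₁ / t + b * t₂ / t = 1 := by rw [← add_div, div_self ht.ne']
  have hpoint : t⁻¹ • x = (a * t₁ / t) • (t₁⁻¹ • x) + (b * t₂ / t) • (t₂⁻¹ • x) := by
    simp only [smul_smul, ← add_smul]
    congr 1
    field_simp
    exact hab.symm
  have hjensen := hf.2 (mem_univ (t₁⁻¹ • x)) (mem_univ (t₂⁻¹ • x))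
    (by positivity : 0 ≤ a * t₁ / t) (by positivity : 0 ≤ b * t₂ / t) hweights
  simp only [smul_eq_mul]
  calc t * f (t⁻¹ • x)
      ≤ t * (a * t₁ / t * f (t₁⁻¹ • x) + b * t₂ / t * f (t₂⁻¹ • x)) := by
        rw [hpoint]; exact mul_le_mul_of_nonneg_left hjensen ht.le
    _ = a * (t₁ * f (t₁⁻¹ • x)) + b * (t₂ * f (t₂⁻¹ • x)) := by field_simp

theorem stmt3_general (y B : ℝ) :
    ConvexOn ℝ (Set.Ioi (0:ℝ)) (fun t : ℝ => ((2:ℝ) ^ (y / (B * t)) - 1) * t) := by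
  have hconv : ConvexOn ℝ univ (fun x : ℝ => (2:ℝ) ^ x - 1) :=
    (convexOn_rpow_left two_pos).add_const (-1)
  convert hconv.perspective (y / B) using 2 with t
  rw [smul_eq_mul, inv_mul_eq_div, div_div, mul_comm]

theorem stmt3 (y B : ℝ) (hy : 0 ≤ y) (hB : 0 < B) :
    ConvexOn ℝ (Set.Ioi (0:ℝ)) (fun t : ℝ => ((2:ℝ) ^ (y / (B * t)) - 1) * t) :=
  stmt3_general y B
end

section
/- Let (o_k)_{k=1}^K, (c_k)_{k=1}^K, (d_k)_{k=1}^K be nonnegative real sequences and define I(1) = max(o_1 + c_1, Σ_{k=1}^K o_k) and I(k) = max(Σ_{j=1}^k o_j + c_k, I(k−1) + d_{k−1}) for 2 ≤ k ≤ K. Then I(K) + d_K ≥ I(1) + Σ_{k=1}^K d_k, with equality if and only if Σ_{j=1}^k o_j + c_k ≤ I(k−1) + d_{k−1} for all 2 ≤ k ≤ K. -/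
theorem stmt6 (K : ℕ) (hK : 1 ≤ K)
    (o c d : ℕ → ℝ) (ho : ∀ k, 0 ≤ o k) (hc : ∀ k, 0 ≤ c k) (hd : ∀ k, 0 ≤ d k)
    (I : ℕ → ℝ) (hI1 : I 1 = max (o 1 + c 1) (∑ k ∈ Finset.Icc 1 K, o k))
    (hrec : ∀ k, 2 ≤ k → k ≤ K →
      I k = max ((∑ j ∈ Finset.Icc 1 k, o j) + c k) (I (k-1) + d (k-1))) :
    I 1 + ∑ k ∈ Finset.Icc 1 K, d k ≤ I K + d K ∧
    (I K + d K = I 1 + ∑ k ∈ Finset.Icc 1 K, d k ↔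
      ∀ k, 2 ≤ k → k ≤ K →
        (∑ j ∈ Finset.Icc 1 k, o j) + c k ≤ I (k-1) + d (k-1)) := by
  have key : ∀ n, 1 ≤ n → n ≤ K →
      I 1 + ∑ k ∈ Finset.Icc 1 (n-1), d k ≤ I n ∧
      (I n = I 1 + ∑ k ∈ Finset.Icc 1 (n-1), d k ↔
        ∀ k, 2 ≤ k → k ≤ n → (∑ j ∈ Finset.Icc 1 k, o j) + c k ≤ I (k-1) + d (k-1)) := by
    intro n
    induction n with
    | zero => intro h; omega
    | succ m ih =>
      intro _ hle
      rcases Nat.eq_zero_or_pos m with hm | hm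
      · subst hm
        have he : Finset.Icc 1 (1-1) = (∅ : Finset ℕ) := by decide
        rw [he]
        simp only [Finset.sum_empty, add_zero]
        refine ⟨le_refl _, ?_⟩
        constructor
        · intro _ k hk2 hk1; omega
        · intro _; trivial
      · obtain ⟨p, rfl⟩ : ∃ p, m = p + 1 := ⟨m-1, by omega⟩
        obtain ⟨ihle, ihiff⟩ := ih (by omega) (by omega)
        have hrec' := hrec (p+2) (by omega) hle
        have h1 : (p+2) - 1 = p+1 := rfl
        have h2 : (p+1) - 1 = p := rfl
        rw [h1] at hrec' ⊢
        rw [h2] at ihle ihiff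
        have hsum : ∑ k ∈ Finset.Icc 1 (p+1), d k
            = (∑ k ∈ Finset.Icc 1 p, d k) + d (p+1) := by
          rw [Finset.sum_Icc_succ_top (by omega)]
        rw [hsum]
        have hchain : I 1 + ((∑ k ∈ Finset.Icc 1 p, d k) + d (p+1))
            ≤ I (p+1) + d (p+1) := by linarith
        have hmax : I (p+1) + d (p+1) ≤ I (p+2) := by
          rw [hrec']; exact le_max_right _ _
        refine ⟨by linarith, ?_, ?_⟩
        · intro heq
          have heq1 : I (p+1) + d (p+1) = I 1 + ((∑ k ∈ Finset.Icc 1 p, d k) + d (p+1)) := by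
            have : I (p+2) ≤ I (p+1) + d (p+1) := by linarith
            linarith [le_antisymm this hmax]
          have heq2 : I (p+1) = I 1 + ∑ k ∈ Finset.Icc 1 p, d k := by linarith
          have hA : (∑ j ∈ Finset.Icc 1 (p+2), o j) + c (p+2) ≤ I (p+1) + d (p+1) := by
            by_contra hA
            push_neg at hA
            have : I (p+2) = (∑ j ∈ Finset.Icc 1 (p+2), o j) + c (p+2) := by
              rw [hrec']; exact max_eq_left (le_of_lt hA)
            linarith
          intro k hk2 hkle
          rcases Nat.lt_or_ge k (p+2) with hk | hk
          · exact ihiff.mp heq2 k hk2 (by omega)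
          · have : k = p + 2 := by omega
            subst this
            rwa [h1]
        · intro hall
          have hA : (∑ j ∈ Finset.Icc 1 (p+2), o j) + c (p+2) ≤ I (p+1) + d (p+1) := by
            have := hall (p+2) (by omega) (by omega)
            rwa [h1] at this
          have hIm : I (p+1) = I 1 + ∑ k ∈ Finset.Icc 1 p, d k :=
            ihiff.mpr (fun k hk2 hkle => hall k hk2 (by omega))
          rw [hrec', max_eq_right hA, hIm]
          ring
  obtain ⟨hle, hiff⟩ := key K hK le_rfl
  have hsum : ∑ k ∈ Finset.Icc 1 K, d k
      = (∑ k ∈ Finset.Icc 1 (K-1), d k) + d K := by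
    obtain ⟨p, rfl⟩ : ∃ p, K = p + 1 := ⟨K-1, by omega⟩
    rw [Finset.sum_Icc_succ_top (by omega)]
    rfl
  rw [hsum]
  constructor
  · linarith
  · constructor
    · intro heq
      exact hiff.mp (by linarith)
    · intro hall
      have := hiff.mpr hall
      linarith
end

section
/- Let φ: (0,∞) → ℝ be defined by φ(t) = (2^{y/(B t)} − 1)·t for constants y, B > 0. Then φ is strictly convex on (0, ∞). -/
/-!
With `a = (y / B) log 2` the function is `t ↦ (exp (a / t) - 1) t`, whose second derivative
`exp (a / t) a² / t³` is positive for `t > 0` as soon as `a ≠ 0`.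
-/

open Real Set Filter

section ExpDivSubOneMul

variable (a : ℝ) {t : ℝ}

theorem hasDerivAt_const_div (ht : t ≠ 0) : HasDerivAt (fun t => a / t) (-(a / t ^ 2)) t := by
  simpa [div_eq_mul_inv] using (hasDerivAt_inv ht).const_mul a

theorem hasDerivAt_exp_div_sub_one_mul (ht : t ≠ 0) :
    HasDerivAt (fun t => (exp (a / t) - 1) * t) (exp (a / t) * (1 - a / t) - 1) t := by
  refine (((hasDerivAt_const_div a ht).exp.sub_const 1).mul (hasDerivAt_id' t)).congr_deriv ?_
  field_simp
  ring

theorem hasDerivAt_exp_div_mul_one_sub_sub_one (ht : t ≠ 0) :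
    HasDerivAt (fun t => exp (a / t) * (1 - a / t) - 1) (exp (a / t) * (a ^ 2 / t ^ 3)) t := by
  have hdiv := hasDerivAt_const_div a ht
  refine ((hdiv.exp.mul (hdiv.const_sub 1)).sub_const 1).congr_deriv ?_
  field_simp
  ring

theorem strictConvexOn_exp_div_sub_one_mul (ha : a ≠ 0) :
    StrictConvexOn ℝ (Ioi 0) fun t => (exp (a / t) - 1) * t := by
  refine strictConvexOn_of_deriv2_pos' (convex_Ioi 0) ?_ fun t (ht : 0 < t) => ?_
  · exact fun t ht =>
      (hasDerivAt_exp_div_sub_one_mul a (ne_of_gt ht)).continuousAt.continuousWithinAt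
  have hderiv : deriv (fun t => (exp (a / t) - 1) * t) =ᶠ[nhds t]
      fun t => exp (a / t) * (1 - a / t) - 1 :=
    eventually_of_mem (Ioi_mem_nhds ht) fun s hs =>
      (hasDerivAt_exp_div_sub_one_mul a (ne_of_gt hs)).deriv
  rw [Function.iterate_succ_apply, Function.iterate_one, hderiv.deriv_eq,
    (hasDerivAt_exp_div_mul_one_sub_sub_one a ht.ne').deriv]
  positivity

end ExpDivSubOneMul

theorem stmt10 (y B : ℝ) (hy : 0 < y) (hB : 0 < B) :
    StrictConvexOn ℝ (Set.Ioi (0:ℝ))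
      (fun t : ℝ => ((2:ℝ) ^ (y / (B * t)) - 1) * t) := by
  have hpow : ∀ t : ℝ, (2:ℝ) ^ (y / (B * t)) = exp (log 2 * y / B / t) := fun t => by
    rw [rpow_def_of_pos two_pos, mul_div_assoc, mul_div_assoc, div_div]
  simp_rw [hpow]
  exact strictConvexOn_exp_div_sub_one_mul _ (by positivity)
end
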